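/- Let f_i(v, c) = v·log(C_i/V) + v·log v − v − log v − v·log c + log c + V·c/C_i. If P_i = C_i/V < P_j = C_j/V, then for any v > 1 and c > 0, ∂f_i/∂c − ∂f_j/∂c = 1/P_i − 1/P_j > 0, i.e., adding mass in the sparser view increases suspiciousness strictly more than adding the same mass in the denser view. -/
import Mathlib


open Real

/-- Cross-view distribution axiom: if `Pᵢ = Cᵢ/V < Pⱼ = Cⱼ/V`, then for any `v > 1` and
`c > 0`, the difference between the mass-derivatives of the per-view suspiciousness in
views `i` and `j` equals `1/Pᵢ − 1/Pⱼ`, which is strictly positive. -/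
theorem crossview_axiom (v c V Ci Cj : ℝ) (hv : 1 < v) (hc : 0 < c) (hV : 0 < V)
    (hCi : 0 < Ci) (hCj : 0 < Cj) (hP : Ci / V < Cj / V) :
    (V / Ci - (v - 1) / c) - (V / Cj - (v - 1) / c) = (Ci / V)⁻¹ - (Cj / V)⁻¹
    ∧ 0 < (Ci / V)⁻¹ - (Cj / V)⁻¹ := by
  have h1 : (Ci / V)⁻¹ = V / Ci := by rw [inv_div]
  have h2 : (Cj / V)⁻¹ = V / Cj := by rw [inv_div]
  constructor
  · rw [h1, h2]; ring
  · rw [h1, h2]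
    have hij : Ci < Cj := by
      have := (div_lt_div_iff₀ hV hV).mp hP
      nlinarith
    have := div_lt_div_of_pos_left (by positivity : (0:ℝ) < V) hCi hij
    linarith
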